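/- Let X : 𝒳 → 𝒴 be a linear map between finite-dimensional complex Hilbert spaces, and let Π₁ on 𝒴 and Π₂ on 𝒳 be orthogonal projections. If ‖Π₁XΠ₂‖₁ = ‖X‖₁ then Π₁XΠ₂ = X. -/

import Mathlib

open Matrix Kronecker BigOperators ComplexOrder

noncomputable section

/-- The positive semidefinite square root (removed from Mathlib; old definition restored). -/
noncomputable def Matrix.PosSemidef.sqrt {n 𝕜 : Type*} [Fintype n] [DecidableEq n] [RCLike 𝕜]
    {A : Matrix n n 𝕜} (hA : A.PosSemidef) : Matrix n n 𝕜 :=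
  (hA.1.eigenvectorUnitary : Matrix n n 𝕜) *
    diagonal (fun i => ((Real.sqrt (hA.1.eigenvalues i) : ℝ) : 𝕜)) *
    (star hA.1.eigenvectorUnitary : Matrix n n 𝕜)

/-- Trace norm (sum of singular values) of a complex matrix. -/
noncomputable def traceNorm {l m : Type*} [Fintype l] [Fintype m] [DecidableEq m]
    (A : Matrix l m ℂ) : ℝ :=
  ((Matrix.posSemidef_conjTranspose_mul_self A).sqrt.trace).re

/-- Frobenius norm. -/
noncomputable def frobNorm {l m : Type*} [Fintype l] [Fintype m]
    (A : Matrix l m ℂ) : ℝ :=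
  Real.sqrt ((Aᴴ * A).trace.re)

/-- Partial transpose on the first tensor factor. -/
def ptranspose {a b : Type*} (X : Matrix (a × b) (a × b) ℂ) : Matrix (a × b) (a × b) ℂ :=
  Matrix.of fun p q => X (q.1, p.2) (p.1, q.2)

/-- Outer product `u v*`. -/
def outer {a : Type*} (u v : a → ℂ) : Matrix a a ℂ :=
  Matrix.of fun p q => u p * star (v q)

/-- Density operator: positive semidefinite with trace one. -/
def IsDensity {a : Type*} [Fintype a] (ρ : Matrix a a ℂ) : Prop :=
  ρ.PosSemidef ∧ ρ.trace = 1

/-- Maximally entangled unit vector in `ℂⁿ ⊗ ℂᵐ`. -/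
def MaxEntangled (n m : ℕ) (u : Fin n × Fin m → ℂ) : Prop :=
  ∃ (x : Fin (min n m) → EuclideanSpace ℂ (Fin n))
    (y : Fin (min n m) → EuclideanSpace ℂ (Fin m)),
    Orthonormal ℂ x ∧ Orthonormal ℂ y ∧
      ∀ p : Fin n × Fin m,
        u p = (1 / Real.sqrt (min n m) : ℝ) * ∑ i, x i p.1 * y i p.2

/-- Extension `Φ ⊗ I` of a matrix map to a system with ancilla `c`. -/
def tensorExt {a b c : Type*} [Fintype a] [DecidableEq a] [Fintype c]
    (Φ : Matrix a a ℂ →ₗ[ℂ] Matrix b b ℂ)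
    (X : Matrix (a × c) (a × c) ℂ) : Matrix (b × c) (b × c) ℂ :=
  Matrix.of fun p q => Φ (Matrix.of fun i j => X (i, p.2) (j, q.2)) p.1 q.1

/-- Quantum channel: completely positive and trace preserving. -/
def IsChannel {a b : Type*} [Fintype a] [DecidableEq a] [Fintype b]
    (Φ : Matrix a a ℂ →ₗ[ℂ] Matrix b b ℂ) : Prop :=
  (∀ X, (Φ X).trace = X.trace) ∧
    ∀ (k : ℕ) (X : Matrix (a × Fin k) (a × Fin k) ℂ),
      X.PosSemidef → (tensorExt Φ X).PosSemidef

/-- Partial trace over the second tensor factor. -/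
def ptraceRight {a b : Type*} [Fintype b] (M : Matrix (a × b) (a × b) ℂ) :
    Matrix a a ℂ :=
  Matrix.of fun i k => ∑ c, M (i, c) (k, c)

/-- Partial trace over the first tensor factor. -/
def ptraceLeft {a b : Type*} [Fintype a] (M : Matrix (a × b) (a × b) ℂ) :
    Matrix b b ℂ :=
  Matrix.of fun i k => ∑ c, M (c, i) (c, k)

/-- Canonical maximally entangled state `τ = (1/d) vec(I)vec(I)*` on `a ⊗ a`. -/
noncomputable def tauGen {a : Type*} [Fintype a] [DecidableEq a] :
    Matrix (a × a) (a × a) ℂ :=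
  Matrix.of fun p q =>
    (Fintype.card a : ℂ)⁻¹ * (if p.1 = p.2 then 1 else 0) * (if q.1 = q.2 then 1 else 0)

/-- The operator `τ ⊗ σ` on `a ⊗ (a ⊗ r)`. -/
noncomputable def tauSigma {a r : Type*} [Fintype a] [DecidableEq a]
    (σ : Matrix r r ℂ) : Matrix (a × (a × r)) (a × (a × r)) ℂ :=
  Matrix.of fun p q => tauGen (p.1, p.2.1) (q.1, q.2.1) * σ p.2.2 q.2.2

/-- Fidelity of two positive semidefinite matrices. -/
noncomputable def fidelity {a : Type*} [Fintype a] [DecidableEq a]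
    {P Q : Matrix a a ℂ} (hP : P.PosSemidef) (hQ : Q.PosSemidef) : ℝ :=
  traceNorm (hP.sqrt * hQ.sqrt)

/-! `‖Y‖₁ = tr √(YᴴY)`. For an orthogonal projection `P` we have
`YᴴY = (PY)ᴴ(PY) + ((1 - P)Y)ᴴ((1 - P)Y) ≥ (PY)ᴴ(PY)`, so operator monotonicity of the square
root gives `‖PY‖₁ ≤ ‖Y‖₁`, and equality forces `√((PY)ᴴ(PY)) = √(YᴴY)`, hence `(1 - P)Y = 0`.
Projections acting on the right reduce to the left case because `‖Yᴴ‖₁ = ‖Y‖₁`. -/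

-- The operator norm makes square matrices a C⋆-algebra, where `CFC.sqrt` is operator monotone.
open scoped MatrixOrder Matrix.Norms.L2Operator

lemma Matrix.PosSemidef.sqrt_eq_cfcSqrt {k : Type*} [Fintype k] [DecidableEq k]
    {A : Matrix k k ℂ} (hA : A.PosSemidef) : hA.sqrt = CFC.sqrt A := by
  rw [CFC.sqrt_eq_cfc, cfc_nnreal_eq_real _ A, hA.1.cfc_eq]
  simp only [IsHermitian.cfc, Unitary.conjStarAlgAut_apply, Matrix.PosSemidef.sqrt]
  congr 3
  funext i
  simp [Real.coe_sqrt, Real.coe_toNNReal', max_eq_left (hA.eigenvalues_nonneg i)]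

lemma Matrix.PosSemidef.trace_sqrt {k : Type*} [Fintype k] [DecidableEq k]
    {A : Matrix k k ℂ} (hA : A.PosSemidef) :
    hA.sqrt.trace = ∑ i, ((√(hA.1.eigenvalues i) : ℝ) : ℂ) := by
  rw [PosSemidef.sqrt, trace_mul_cycle, Unitary.coe_star_mul_self, Matrix.one_mul, trace_diagonal]
  rfl

section SqrtTrace

variable {k : Type*} [Fintype k] [DecidableEq k]

lemma Matrix.trace_re_sqrt_le_of_le {A B : Matrix k k ℂ} (hAB : A ≤ B) :
    (CFC.sqrt A).trace.re ≤ (CFC.sqrt B).trace.re := by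
  have hD : (CFC.sqrt B - CFC.sqrt A).PosSemidef :=
    nonneg_iff_posSemidef.mp (sub_nonneg.mpr (CFC.sqrt_le_sqrt A B hAB))
  have := Complex.nonneg_iff.mp hD.trace_nonneg
  rw [trace_sub, Complex.sub_re] at this
  linarith [this.1]

lemma Matrix.eq_of_trace_re_sqrt_eq {A B : Matrix k k ℂ} (hA : 0 ≤ A) (hAB : A ≤ B)
    (h : (CFC.sqrt A).trace.re = (CFC.sqrt B).trace.re) : A = B := by
  have hD : (CFC.sqrt B - CFC.sqrt A).PosSemidef :=
    nonneg_iff_posSemidef.mp (sub_nonneg.mpr (CFC.sqrt_le_sqrt A B hAB))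
  have htr : (CFC.sqrt B - CFC.sqrt A).trace = 0 := by
    obtain ⟨-, him⟩ := Complex.nonneg_iff.mp hD.trace_nonneg
    refine Complex.ext ?_ him.symm
    rw [trace_sub, Complex.sub_re, h, sub_self, Complex.zero_re]
  have hsqrt : CFC.sqrt A = CFC.sqrt B := (sub_eq_zero.mp (hD.trace_eq_zero_iff.mp htr)).symm
  rw [← CFC.sqrt_mul_sqrt_self A hA, ← CFC.sqrt_mul_sqrt_self B (hA.trans hAB), hsqrt]

end SqrtTrace

open Polynomial in
lemma Matrix.sum_map_roots_charpoly_mul_comm {k l R M : Type*} [Fintype k] [DecidableEq k]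
    [Fintype l] [DecidableEq l] [CommRing R] [IsDomain R] [AddCommMonoid M]
    (A : Matrix k l R) (B : Matrix l k R) {g : R → M} (hg : g 0 = 0) :
    ((A * B).charpoly.roots.map g).sum = ((B * A).charpoly.roots.map g).sum := by
  have h := congrArg (fun p : R[X] => (p.roots.map g).sum) (charpoly_mul_comm' A B)
  simpa [roots_mul, (charpoly_monic _).ne_zero, Multiset.map_nsmul, Multiset.sum_nsmul, hg]
    using h

lemma Matrix.IsHermitian.sum_map_roots_charpoly {k : Type*} [Fintype k] [DecidableEq k]
    {A : Matrix k k ℂ} (hA : A.IsHermitian) (f : ℝ → ℝ) :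
    (A.charpoly.roots.map (f ∘ Complex.re)).sum = ∑ i, f (hA.eigenvalues i) := by
  rw [hA.roots_charpoly_eq_eigenvalues, Multiset.map_map]
  rfl

section StarProjection

variable {k l : Type*} [Fintype k] [DecidableEq k] {P : Matrix k k ℂ}

lemma conjTranspose_mul_self_eq_add_of_isStarProjection (hP : IsStarProjection P)
    (Y : Matrix k l ℂ) :
    Yᴴ * Y = (P * Y)ᴴ * (P * Y) + ((1 - P) * Y)ᴴ * ((1 - P) * Y) := by
  have hQ := hP.one_sub
  calc Yᴴ * Y = Yᴴ * (P * P * Y + (1 - P) * (1 - P) * Y) := by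
        rw [hP.isIdempotentElem.eq, hQ.isIdempotentElem.eq, ← Matrix.add_mul, add_sub_cancel,
          Matrix.one_mul]
    _ = (P * Y)ᴴ * (P * Y) + ((1 - P) * Y)ᴴ * ((1 - P) * Y) := by
        rw [conjTranspose_mul, conjTranspose_mul, ← star_eq_conjTranspose,
          ← star_eq_conjTranspose, hP.isSelfAdjoint.star_eq, hQ.isSelfAdjoint.star_eq]
        simp only [Matrix.mul_add, Matrix.mul_assoc]

lemma conjTranspose_mul_self_le_of_isStarProjection [Fintype l] (hP : IsStarProjection P)
    (Y : Matrix k l ℂ) : (P * Y)ᴴ * (P * Y) ≤ Yᴴ * Y := by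
  rw [conjTranspose_mul_self_eq_add_of_isStarProjection hP Y]
  exact le_add_of_nonneg_right (posSemidef_conjTranspose_mul_self _).nonneg

end StarProjection

section TraceNorm

variable {k l : Type*} [Fintype k] [Fintype l] [DecidableEq l]

lemma traceNorm_eq_trace_sqrt (Y : Matrix k l ℂ) :
    traceNorm Y = (CFC.sqrt (Yᴴ * Y)).trace.re := by
  rw [traceNorm, PosSemidef.sqrt_eq_cfcSqrt]

lemma traceNorm_eq_sum_map_roots_charpoly (Y : Matrix k l ℂ) :
    traceNorm Y = ((Yᴴ * Y).charpoly.roots.map (Real.sqrt ∘ Complex.re)).sum := by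
  rw [traceNorm, PosSemidef.trace_sqrt, Complex.re_sum,
    IsHermitian.sum_map_roots_charpoly (isHermitian_conjTranspose_mul_self Y)]
  simp only [Complex.ofReal_re]

-- `Yᴴ Y` and `Y Yᴴ` have the same nonzero eigenvalues, with multiplicities.
lemma traceNorm_conjTranspose [DecidableEq k] (Y : Matrix k l ℂ) :
    traceNorm Yᴴ = traceNorm Y := by
  rw [traceNorm_eq_sum_map_roots_charpoly, traceNorm_eq_sum_map_roots_charpoly,
    conjTranspose_conjTranspose]
  exact sum_map_roots_charpoly_mul_comm _ _ (by simp)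

variable [DecidableEq k] {P : Matrix k k ℂ}

lemma traceNorm_proj_mul_le (hP : IsStarProjection P) (Y : Matrix k l ℂ) :
    traceNorm (P * Y) ≤ traceNorm Y := by
  rw [traceNorm_eq_trace_sqrt, traceNorm_eq_trace_sqrt]
  exact trace_re_sqrt_le_of_le (conjTranspose_mul_self_le_of_isStarProjection hP Y)

lemma proj_mul_eq_of_traceNorm_eq (hP : IsStarProjection P) {Y : Matrix k l ℂ}
    (h : traceNorm (P * Y) = traceNorm Y) : P * Y = Y := by
  rw [traceNorm_eq_trace_sqrt, traceNorm_eq_trace_sqrt] at h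
  have heq := eq_of_trace_re_sqrt_eq (posSemidef_conjTranspose_mul_self _).nonneg
    (conjTranspose_mul_self_le_of_isStarProjection hP Y) h
  rw [conjTranspose_mul_self_eq_add_of_isStarProjection hP Y, left_eq_add,
    conjTranspose_mul_self_eq_zero, Matrix.sub_mul, Matrix.one_mul, sub_eq_zero] at heq
  exact heq.symm

end TraceNorm

section RightProjection

variable {k l : Type*} [Fintype k] [DecidableEq k] [Fintype l] [DecidableEq l]
  {P : Matrix l l ℂ}

lemma traceNorm_mul_proj_eq (hP : IsStarProjection P) (Y : Matrix k l ℂ) :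
    traceNorm (Y * P) = traceNorm (P * Yᴴ) := by
  rw [← traceNorm_conjTranspose, conjTranspose_mul, ← star_eq_conjTranspose,
    hP.isSelfAdjoint.star_eq]

lemma traceNorm_mul_proj_le (hP : IsStarProjection P) (Y : Matrix k l ℂ) :
    traceNorm (Y * P) ≤ traceNorm Y := by
  rw [traceNorm_mul_proj_eq hP, ← traceNorm_conjTranspose Y]
  exact traceNorm_proj_mul_le hP Yᴴ

lemma mul_proj_eq_of_traceNorm_eq (hP : IsStarProjection P) {Y : Matrix k l ℂ}
    (h : traceNorm (Y * P) = traceNorm Y) : Y * P = Y := by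
  rw [traceNorm_mul_proj_eq hP, ← traceNorm_conjTranspose Y] at h
  have h' := congrArg conjTranspose (proj_mul_eq_of_traceNorm_eq hP h)
  rwa [conjTranspose_mul, conjTranspose_conjTranspose, ← star_eq_conjTranspose P,
    hP.isSelfAdjoint.star_eq] at h'

end RightProjection

/-- If `‖Π₁ X Π₂‖₁ = ‖X‖₁` for orthogonal projections `Π₁, Π₂`, then `Π₁ X Π₂ = X`. -/
theorem stmt8 (n m : ℕ) (X : Matrix (Fin m) (Fin n) ℂ)
    (P₁ : Matrix (Fin m) (Fin m) ℂ) (P₂ : Matrix (Fin n) (Fin n) ℂ)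
    (hP₁ : P₁ᴴ = P₁) (hP₁' : P₁ * P₁ = P₁)
    (hP₂ : P₂ᴴ = P₂) (hP₂' : P₂ * P₂ = P₂)
    (h : traceNorm (P₁ * X * P₂) = traceNorm X) :
    P₁ * X * P₂ = X := by
  have hproj₁ : IsStarProjection P₁ := ⟨hP₁', hP₁⟩
  have hproj₂ : IsStarProjection P₂ := ⟨hP₂', hP₂⟩
  rw [Matrix.mul_assoc] at h ⊢
  have hXP₂ : X * P₂ = X := by
    refine mul_proj_eq_of_traceNorm_eq hproj₂ (le_antisymm (traceNorm_mul_proj_le hproj₂ X) ?_)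
    calc traceNorm X = traceNorm (P₁ * (X * P₂)) := h.symm
      _ ≤ traceNorm (X * P₂) := traceNorm_proj_mul_le hproj₁ _
  rw [hXP₂] at h ⊢
  exact proj_mul_eq_of_traceNorm_eq hproj₁ h
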